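/- arXiv:math/9812153 — 3 statements merged into one kernel-verified Lean document; each statement's English description precedes it below -/
import Mathlib

section
/- Let π be a skew-symmetric bivector field on E, let a ≤ b, let α be a continuous cotangent path over a continuous curve γ on [a,b] which is a loop, i.e. γ(a) = γ(b), and let f : E → ℝ be continuously differentiable. Then the integral along α of the Hamiltonian vector field X_f vanishes: ∫_{a}^{b} (α t)(π (γ t)(fderiv ℝ f (γ t))) dt = 0. Consequently the integral along a cotangent loop descends to a linear functional on the first Poisson cohomology (the quotient of Poisson vector fields by Hamiltonian ones). (Corollary to Proposition 3.1.) -/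
/-!
Along a cotangent path, skew-symmetry of `π` turns the pairing `α(X_f)` into `-(df)(π α) = -(f ∘ γ)'`,
so the integral is `f (γ a) - f (γ b)`, which vanishes on a loop.
-/

open Set

theorem intervalIntegral.integral_eq_zero_of_hasDerivAt_of_eq
    {F : Type*} [NormedAddCommGroup F] [NormedSpace ℝ F] [CompleteSpace F]
    {φ g : ℝ → F} {a b : ℝ} (hderiv : ∀ t ∈ uIcc a b, HasDerivAt φ (g t) t) (heq : φ a = φ b) :
    ∫ t in a..b, g t = 0 := by
  by_cases hg : IntervalIntegrable g MeasureTheory.volume a b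
  · rw [integral_eq_sub_of_hasDerivAt hderiv hg, heq, sub_self]
  · exact integral_undef hg

theorem HasDerivAt.comp_of_skew
    {E : Type*} [NormedAddCommGroup E] [NormedSpace ℝ E]
    {P : (E →L[ℝ] ℝ) → E} (hskew : ∀ ξ η : E →L[ℝ] ℝ, ξ (P η) = -η (P ξ))
    {f : E → ℝ} {γ : ℝ → E} {ξ : E →L[ℝ] ℝ} {t : ℝ}
    (hγ : HasDerivAt γ (P ξ) t) (hf : DifferentiableAt ℝ f (γ t)) :
    HasDerivAt (f ∘ γ) (-ξ (P (fderiv ℝ f (γ t)))) t := by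
  rw [← hskew]
  exact hf.hasFDerivAt.comp_hasDerivAt t hγ

theorem integral_along_cotangent_loop_of_hamiltonian_eq_zero_general
    {E : Type*} [NormedAddCommGroup E] [NormedSpace ℝ E]
    (π : E → ((E →L[ℝ] ℝ) →ₗ[ℝ] E))
    (hskew : ∀ (x : E) (ξ η : E →L[ℝ] ℝ), ξ (π x η) = - η (π x ξ))
    {a b : ℝ} (hab : a ≤ b)
    {α : ℝ → (E →L[ℝ] ℝ)} {γ : ℝ → E}
    (hcot : ∀ t ∈ Set.Icc a b, HasDerivAt γ (π (γ t) (α t)) t)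
    (hloop : γ a = γ b)
    (f : E → ℝ) (hf : ContDiff ℝ 1 f) :
    ∫ t in a..b, (α t) (π (γ t) (fderiv ℝ f (γ t))) = 0 := by
  have hderiv : ∀ t ∈ uIcc a b,
      HasDerivAt (f ∘ γ) (-(α t) (π (γ t) (fderiv ℝ f (γ t)))) t := fun t ht =>
    (hcot t (uIcc_of_le hab ▸ ht)).comp_of_skew (hskew (γ t))
      (hf.differentiable one_ne_zero (γ t))
  rw [← neg_eq_zero, ← intervalIntegral.integral_neg]
  exact intervalIntegral.integral_eq_zero_of_hasDerivAt_of_eq hderiv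
    (congrArg f hloop)

/-- **Corollary to Proposition 3.1, in a chart.** The integral of a Hamiltonian vector field
`X_f = π^#(df)` along a cotangent loop (`γ a = γ b`) vanishes; hence integration along a
cotangent loop descends to the first Poisson cohomology. -/
theorem integral_along_cotangent_loop_of_hamiltonian_eq_zero
    {E : Type*} [NormedAddCommGroup E] [NormedSpace ℝ E] [FiniteDimensional ℝ E]
    (π : E → ((E →L[ℝ] ℝ) →ₗ[ℝ] E))
    (hskew : ∀ (x : E) (ξ η : E →L[ℝ] ℝ), ξ (π x η) = - η (π x ξ))
    {a b : ℝ} (hab : a ≤ b)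
    {α : ℝ → (E →L[ℝ] ℝ)} {γ : ℝ → E}
    (hα : Continuous α) (hγ : Continuous γ)
    (hcot : ∀ t ∈ Set.Icc a b, HasDerivAt γ (π (γ t) (α t)) t)
    (hloop : γ a = γ b)
    (f : E → ℝ) (hf : ContDiff ℝ 1 f) :
    ∫ t in a..b, (α t) (π (γ t) (fderiv ℝ f (γ t))) = 0 :=
  integral_along_cotangent_loop_of_hamiltonian_eq_zero_general π hskew hab hcot hloop f hf
end

section
/- Let n be a natural number, a ≤ b real numbers, and Φ, A : ℝ → Matrix (Fin n) (Fin n) ℝ with A continuous on [a,b] and Φ having derivative A(t) * Φ(t) at every t ∈ [a,b]. Then det(Φ b) = det(Φ a) * exp(∫_{a}^{b} trace(A t) dt). (Liouville's theorem for linear time-dependent systems, equation (13) of the paper in matrix form.) -/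
/-!
By Jacobi's formula, `(det Φ)'` is the sum over `i` of the determinants of `Φ` with row `i`
replaced by row `i` of `Φ' = A Φ`, that is by `∑ⱼ A i j • Φ j`; multilinearity and alternation
reduce the `i`-th term to `A i i * det Φ`. So `w = det Φ` solves the scalar equation
`w' = (tr A) w`, and `w(t) exp (-∫ₐᵗ tr A)` has zero derivative on `[a, b]`.
-/

open Set Real

namespace Matrix

variable {ι R : Type*} [Fintype ι] [DecidableEq ι] [CommRing R]

variable (R) in
noncomputable def detRowContinuousMultilinearMap [TopologicalSpace R] [IsTopologicalRing R] :
    ContinuousMultilinearMap R (fun _ : ι => ι → R) R :=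
  { (detRowAlternating : (ι → R) [⋀^ι]→ₗ[R] R).toMultilinearMap with
    cont := continuous_id.matrix_det }

theorem sum_det_updateRow_mul (B M : Matrix ι ι R) :
    ∑ i, (M.updateRow i ((B * M) i)).det = B.trace * M.det := by
  have hrow : ∀ i, (B * M) i = ∑ j, B i j • M j := fun i => by
    ext k
    simp [mul_apply, Finset.sum_apply]
  simp only [hrow, det_updateRow_sum, smul_eq_mul, ← Finset.sum_mul, trace, diag]

end Matrix

theorem HasDerivAt.matrix_det {𝕜 ι : Type*} [NontriviallyNormedField 𝕜] [Fintype ι]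
    [DecidableEq ι] {Φ : 𝕜 → Matrix ι ι 𝕜} {Φ' : Matrix ι ι 𝕜} {t : 𝕜}
    (h : HasDerivAt Φ Φ' t) :
    HasDerivAt (fun s => (Φ s).det) (∑ i, ((Φ t).updateRow i (Φ' i)).det) t := by
  -- matrices and row families carry the same topology and additive structure
  have hrows : HasDerivAt (fun s => Matrix.of.symm (Φ s)) (Matrix.of.symm Φ') t := h
  have hdet := ((Matrix.detRowContinuousMultilinearMap 𝕜).hasFDerivAt _).comp_hasDerivAt t hrows
  rwa [ContinuousMultilinearMap.linearDeriv_apply] at hdet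

theorem ContinuousOn.hasDerivWithinAt_integral_Icc {E : Type*} [NormedAddCommGroup E]
    [NormedSpace ℝ E] [CompleteSpace E] {f : ℝ → E} {a b t : ℝ} (hf : ContinuousOn f (Icc a b))
    (ht : t ∈ Icc a b) : HasDerivWithinAt (fun u => ∫ x in a..u, f x) (f t) (Icc a b) t := by
  have : Fact (t ∈ Icc a b) := ⟨ht⟩
  exact intervalIntegral.integral_hasDerivWithinAt_right
    (hf.mono (uIcc_subset_Icc (left_mem_Icc.2 (ht.1.trans ht.2)) ht)).intervalIntegrable
    (hf.stronglyMeasurableAtFilter_nhdsWithin measurableSet_Icc t) (hf t ht)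

theorem eq_mul_exp_integral_of_hasDerivAt {a b : ℝ} (hab : a ≤ b) {W c : ℝ → ℝ}
    (hc : ContinuousOn c (Icc a b)) (hW : ∀ t ∈ Icc a b, HasDerivAt W (c t * W t) t) :
    W b = W a * exp (∫ t in a..b, c t) := by
  set F := fun u => ∫ t in a..u, c t
  have hderiv : ∀ t ∈ Icc a b, HasDerivWithinAt (fun u => W u * exp (-F u)) 0 (Icc a b) t := by
    intro t ht
    have hexp : HasDerivWithinAt (fun u => exp (-F u)) (exp (-F t) * -c t) (Icc a b) t :=
      (hc.hasDerivWithinAt_integral_Icc ht).neg.exp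
    exact ((hW t ht).hasDerivWithinAt.mul hexp).congr_deriv (by ring)
  have hconst := constant_of_has_deriv_right_zero (fun t ht => (hderiv t ht).continuousWithinAt)
    (fun t ht => (hderiv t (Ico_subset_Icc_self ht)).mono_of_mem_nhdsWithin
      (Icc_mem_nhdsGE_of_mem ht)) b (right_mem_Icc.2 hab)
  simp only [F, intervalIntegral.integral_same, neg_zero, exp_zero, mul_one] at hconst
  rw [← hconst, mul_assoc, ← exp_add, neg_add_cancel, exp_zero, mul_one]

/-- **Liouville's theorem for linear time-dependent systems** (equation (13) of the paper in
matrix form): if `Φ' = A(t) Φ` on `[a,b]` with `A` continuous on `[a,b]`, then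
`det (Φ b) = det (Φ a) * exp (∫ₐᵇ trace (A t) dt)`. -/
theorem det_fundamental_solution_eq_exp_integral_trace
    {n : ℕ} {a b : ℝ} (hab : a ≤ b) (Φ A : ℝ → Matrix (Fin n) (Fin n) ℝ)
    (hA : ContinuousOn A (Set.Icc a b))
    (hΦ : ∀ t ∈ Set.Icc a b, HasDerivAt Φ (A t * Φ t) t) :
    (Φ b).det = (Φ a).det * Real.exp (∫ t in a..b, (A t).trace) :=
  eq_mul_exp_integral_of_hasDerivAt hab (c := fun t => (A t).trace)
    (continuous_id.matrix_trace.comp_continuousOn hA)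
    fun t ht => by simpa only [Matrix.sum_det_updateRow_mul] using (hΦ t ht).matrix_det
end

section
/- Let E be a finite-dimensional real normed vector space, a ≤ b, and w : ℝ → E → E a time-dependent vector field such that each w(t) is differentiable. Let γ : ℝ → E be an integral curve of w on [a,b], i.e. γ has derivative w(t)(γ(t)) at every t ∈ [a,b]. Let Φ : ℝ → (E →L[ℝ] E) satisfy Φ(a) = id and the variational equation: Φ has derivative (fderiv ℝ (w t) (γ t)).comp (Φ t) at every t ∈ [a,b], and assume t ↦ fderiv ℝ (w t) (γ t) is continuous on [a,b]. Then det(Φ b) = exp(∫_{a}^{b} trace(fderiv ℝ (w t) (γ t)) dt). (Liouville's theorem along an integral curve, equation (13), with respect to the translation-invariant volume; the divergence of a vector field with respect to this volume is the trace of its derivative.) -/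
/-!
By Jacobi's formula, `(det Φ)'` is the sum over `i` of the determinants of `Φ` with row `i`
replaced by row `i` of `Φ'`. When `Φ' = A Φ`, row `i` of `Φ'` is the combination
`∑ k, A i k • Φ k` of the rows of `Φ`, so replacing row `i` by it multiplies the determinant
by `A i i`. Hence `(det Φ)' = tr A · det Φ`, a scalar linear equation whose solution with
`det Φ a = 1` is `exp ∫ tr A`.
-/

namespace Matrix

variable {n : Type*} [Fintype n] [DecidableEq n]

theorem sum_det_updateRow_mul_self {R : Type*} [CommRing R] (A B : Matrix n n R) :
    ∑ i, (A.updateRow i ((B * A) i)).det = B.trace * A.det := by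
  have hrow : ∀ i, (B * A) i = ∑ k, B i k • A k := fun i => by
    ext j; simp [mul_apply, Finset.sum_apply]
  simp only [hrow, det_updateRow_sum, smul_eq_mul, ← Finset.sum_mul, trace, diag]

variable {𝕜 : Type*} [NontriviallyNormedField 𝕜]

def detRowContinuousMultilinear : ContinuousMultilinearMap 𝕜 (fun _ : n => n → 𝕜) 𝕜 :=
  { (detRowAlternating : (n → 𝕜) [⋀^n]→ₗ[𝕜] 𝕜).toMultilinearMap with
    cont := continuous_id.matrix_det }

theorem hasDerivAt_det {M : 𝕜 → Matrix n n 𝕜} {M' : Matrix n n 𝕜} {x : 𝕜}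
    (hM : ∀ i, HasDerivAt (fun t => M t i) (M' i) x) :
    HasDerivAt (fun t => (M t).det) (∑ i, ((M x).updateRow i (M' i)).det) x := by
  refine (HasFDerivAt.multilinear_comp (f := detRowContinuousMultilinear)
    fun i => (hM i).hasFDerivAt).hasDerivAt.congr_deriv ?_
  simp only [_root_.sum_apply, ContinuousLinearMap.comp_apply,
    ContinuousLinearMap.toSpanSingleton_apply, one_smul,
    ContinuousMultilinearMap.toContinuousLinearMap_apply, updateRow]
  rfl

end Matrix

theorem ContinuousLinearMap.hasDerivAt_det_of_hasDerivAt_comp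
    {𝕜 : Type*} [NontriviallyNormedField 𝕜] [CompleteSpace 𝕜]
    {E : Type*} [NormedAddCommGroup E] [NormedSpace 𝕜 E] [FiniteDimensional 𝕜 E]
    {Φ : 𝕜 → E →L[𝕜] E} {A : E →L[𝕜] E} {x : 𝕜}
    (hΦ : HasDerivAt Φ (A ∘L Φ x) x) :
    HasDerivAt (fun t => (Φ t).det) (LinearMap.trace 𝕜 E A * (Φ x).det) x := by
  let d := Module.finrank 𝕜 E
  let b := Module.finBasis 𝕜 E
  let toMatrix : (E →L[𝕜] E) →ₗ[𝕜] Matrix (Fin d) (Fin d) 𝕜 :=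
    (LinearMap.toMatrix b b).toLinearMap ∘ₗ ContinuousLinearMap.coeLM 𝕜
  have hcomp : toMatrix (A ∘L Φ x) = toMatrix A * toMatrix (Φ x) := by
    change LinearMap.toMatrix b b ↑(A ∘L Φ x) = _
    rw [ContinuousLinearMap.toLinearMap_comp, LinearMap.toMatrix_comp b b b]
    rfl
  have hrow : ∀ i, HasDerivAt (fun t => toMatrix (Φ t) i) ((toMatrix A * toMatrix (Φ x)) i) x :=
    fun i => by
      refine ((LinearMap.proj i ∘ₗ toMatrix).toContinuousLinearMap.hasFDerivAt.comp_hasDerivAt x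
        hΦ).congr_deriv ?_
      change toMatrix (A ∘L Φ x) i = _
      rw [hcomp]
  have := Matrix.hasDerivAt_det hrow
  rw [Matrix.sum_det_updateRow_mul_self] at this
  simpa [toMatrix, LinearMap.det_toMatrix, ← LinearMap.trace_eq_matrix_trace] using this

open Set in
theorem eq_mul_exp_integral_of_hasDerivAt_mul {g τ : ℝ → ℝ} {a b : ℝ} (hab : a ≤ b)
    (hg : ∀ t ∈ Icc a b, HasDerivAt g (τ t * g t) t) (hτ : ContinuousOn τ (Icc a b)) :
    g b = g a * Real.exp (∫ t in a..b, τ t) := by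
  -- extend `τ` continuously to all of `ℝ` so that its primitive is differentiable at `a` and `b`
  set τ' : ℝ → ℝ := fun t => τ (projIcc a b hab t)
  have hτ'_eq : EqOn τ' τ (Icc a b) := fun t ht => by simp [τ', projIcc_of_mem hab ht]
  have hτ' : Continuous τ' :=
    hτ.comp_continuous continuous_projIcc.subtype_val fun t => (projIcc a b hab t).2
  set F : ℝ → ℝ := fun u => ∫ s in a..u, τ' s
  have hF : ∀ u, HasDerivAt F (τ' u) u :=
    fun u => (hτ'.integral_hasStrictDerivAt a u).hasDerivAt
  have hconst : ∀ t ∈ uIcc a b, HasDerivAt (fun t => g t * Real.exp (-F t)) 0 t := by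
    intro t ht
    rw [uIcc_of_le hab] at ht
    refine ((hg t ht).mul (hF t).neg.exp).congr_deriv ?_
    rw [hτ'_eq ht]
    ring
  have hba : g b * Real.exp (-F b) = g a := by
    have := intervalIntegral.integral_eq_sub_of_hasDerivAt hconst intervalIntegrable_const
    simpa [F, sub_eq_zero] using this.symm
  have hint : ∫ t in a..b, τ t = F b := intervalIntegral.integral_congr fun t ht =>
    (hτ'_eq (uIcc_of_le hab ▸ ht)).symm
  rw [hint, ← hba, mul_assoc, ← Real.exp_add, neg_add_cancel, Real.exp_zero, mul_one]

theorem det_linearized_flow_eq_exp_integral_div_general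
    {E : Type*} [NormedAddCommGroup E] [NormedSpace ℝ E] [FiniteDimensional ℝ E]
    {a b : ℝ} (hab : a ≤ b) (w : ℝ → E → E)
    (γ : ℝ → E)
    (Φ : ℝ → (E →L[ℝ] E)) (hΦa : Φ a = ContinuousLinearMap.id ℝ E)
    (hΦ : ∀ t ∈ Set.Icc a b, HasDerivAt Φ ((fderiv ℝ (w t) (γ t)).comp (Φ t)) t)
    (hcont : ContinuousOn (fun t => fderiv ℝ (w t) (γ t)) (Set.Icc a b)) :
    LinearMap.det ((Φ b : E →L[ℝ] E) : E →ₗ[ℝ] E)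
      = Real.exp (∫ t in a..b,
          LinearMap.trace ℝ E ((fderiv ℝ (w t) (γ t) : E →L[ℝ] E) : E →ₗ[ℝ] E)) := by
  have hdet := fun t ht => ContinuousLinearMap.hasDerivAt_det_of_hasDerivAt_comp (hΦ t ht)
  have htrace :
      ContinuousOn (fun t => LinearMap.trace ℝ E (fderiv ℝ (w t) (γ t))) (Set.Icc a b) :=
    (LinearMap.trace ℝ E ∘ₗ ContinuousLinearMap.coeLM ℝ).continuous_of_finiteDimensional
      |>.comp_continuousOn hcont
  have := eq_mul_exp_integral_of_hasDerivAt_mul hab hdet htrace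
  simpa [hΦa, ContinuousLinearMap.det] using this

/-- **Liouville's theorem along an integral curve** (equation (13) of the paper, with respect
to the translation-invariant volume): if `γ` is an integral curve of the time-dependent
vector field `w` on `[a,b]` and `Φ` is the linearization of the flow along `γ`, i.e. `Φ`
solves the variational equation `Φ' = Dw_t(γ t) ∘ Φ` with `Φ a = id`, then
`det (Φ b) = exp (∫ₐᵇ trace (Dw_t (γ t)) dt)`; the divergence of `w t` with respect to the
translation-invariant volume is the trace of its derivative. -/
theorem det_linearized_flow_eq_exp_integral_div
    {E : Type*} [NormedAddCommGroup E] [NormedSpace ℝ E] [FiniteDimensional ℝ E]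
    {a b : ℝ} (hab : a ≤ b) (w : ℝ → E → E)
    (hw : ∀ t, Differentiable ℝ (w t))
    (γ : ℝ → E) (hγ : ∀ t ∈ Set.Icc a b, HasDerivAt γ (w t (γ t)) t)
    (Φ : ℝ → (E →L[ℝ] E)) (hΦa : Φ a = ContinuousLinearMap.id ℝ E)
    (hΦ : ∀ t ∈ Set.Icc a b, HasDerivAt Φ ((fderiv ℝ (w t) (γ t)).comp (Φ t)) t)
    (hcont : ContinuousOn (fun t => fderiv ℝ (w t) (γ t)) (Set.Icc a b)) :
    LinearMap.det ((Φ b : E →L[ℝ] E) : E →ₗ[ℝ] E)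
      = Real.exp (∫ t in a..b,
          LinearMap.trace ℝ E ((fderiv ℝ (w t) (γ t) : E →L[ℝ] E) : E →ₗ[ℝ] E)) :=
  det_linearized_flow_eq_exp_integral_div_general hab w γ Φ hΦa hΦ hcont
end
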